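/- Suppose V_K^{xx} = Σᵢ₌₁ᴺ yⁱ (yⁱ)ᵀ is a sum of N rank-one terms, Fₓ, Fᵤ are matrices, M is symmetric positive definite, and define Qₓₓ = Fₓᵀ V Fₓ, Qₓᵤ = Fₓᵀ V Fᵤ with V = Σᵢ rⁱ(rⁱ)ᵀ. Then the matrix W := Qₓₓ - Qₓᵤ M⁻¹ Qᵤₓ (with Qᵤₓ = Qₓᵤᵀ) is symmetric of rank at most N, and if W is positive semidefinite it admits a factorization W = Σᵢ₌₁ᴺ r̃ⁱ(r̃ⁱ)ᵀ for some vectors r̃ⁱ. -/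

import Mathlib

open Matrix
open scoped ComplexOrder

/-!
Writing `V = Aᵀ A` with `A` the `N × n` matrix whose rows are the `rⁱ` and `X = A Fx`,
`Y = A Fu`, the matrix `W = Xᵀ X - Xᵀ Y M⁻¹ Yᵀ X = Xᵀ (X - Y M⁻¹ Yᵀ X)` factors through an
`N`-dimensional space, so its rank is at most `N`; it is symmetric because `V` and `M⁻¹` are.
A positive semidefinite `W` is `∑ⱼ λⱼ uⱼ uⱼᵀ` by the spectral theorem, and only `rank W ≤ N` of
the eigenvalues are nonzero, so the vectors `√λⱼ uⱼ` can be packed into `N` slots.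
-/

theorem Fintype.exists_sum_fin_eq_sum_of_card_le {ι α β : Type*} [Fintype ι] [Zero α]
    [AddCommMonoid β] {N : ℕ} (g : α → β) (hg : g 0 = 0) (v : ι → α) (s : Finset ι)
    (hvs : ∀ i ∉ s, v i = 0) (hs : s.card ≤ N) :
    ∃ w : Fin N → α, ∑ i, g (v i) = ∑ k, g (w k) := by
  obtain ⟨e⟩ : Nonempty (s ↪ Fin N) := Function.Embedding.nonempty_of_card_le (by simpa using hs)
  refine ⟨Function.extend e (fun i ↦ v i) 0, ?_⟩
  rw [← Fintype.sum_of_injective Subtype.val Subtype.val_injective (fun i : s ↦ g (v i)) _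
    (fun i hi ↦ by rw [hvs i fun his ↦ hi ⟨⟨i, his⟩, rfl⟩, hg]) fun _ ↦ rfl]
  refine Fintype.sum_of_injective e e.injective _ _ (fun k hk ↦ ?_) fun i ↦ ?_
  · rw [Function.extend_apply' _ _ _ hk, Pi.zero_apply, hg]
  · rw [e.injective.extend_apply]

namespace Matrix

theorem sum_vecMulVec_self_eq_transpose_mul {ι n α : Type*} [Fintype ι]
    [NonUnitalNonAssocSemiring α] (r : ι → n → α) :
    ∑ i, vecMulVec (r i) (r i) = (of r)ᵀ * of r := by
  ext x y
  simp [mul_apply, vecMulVec_apply, Matrix.sum_apply]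

theorem rank_transpose_mul_self_sub_le {κ n m α : Type*} [Fintype κ] [Fintype n] [Fintype m]
    [CommRing α] [StrongRankCondition α] (X : Matrix κ n α) (Y : Matrix κ m α)
    (S : Matrix m m α) :
    (Xᵀ * X - Xᵀ * Y * S * (Xᵀ * Y)ᵀ).rank ≤ Fintype.card κ := by
  have hfac : Xᵀ * X - Xᵀ * Y * S * (Xᵀ * Y)ᵀ = Xᵀ * (X - Y * S * Yᵀ * X) := by
    simp only [Matrix.mul_sub, transpose_mul, transpose_transpose, Matrix.mul_assoc]
  rw [hfac]
  exact (rank_mul_le_left _ _).trans (rank_le_card_width _)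

variable {n 𝕜 : Type*} [Fintype n] [RCLike 𝕜]

theorem IsHermitian.eq_sum_eigenvalues_smul_vecMulVec [DecidableEq n] {A : Matrix n n 𝕜}
    (hA : A.IsHermitian) :
    A = ∑ j, hA.eigenvalues j •
      vecMulVec ⇑(hA.eigenvectorBasis j) (star ⇑(hA.eigenvectorBasis j)) := by
  conv_lhs => rw [hA.spectral_theorem]
  ext x y
  simp [mul_apply, Matrix.sum_apply, vecMulVec_apply, diagonal_apply, RCLike.real_smul_eq_coe_mul]
  exact Finset.sum_congr rfl fun _ _ ↦ by ring

theorem PosSemidef.exists_eq_sum_vecMulVec_of_rank_le {A : Matrix n n 𝕜} (hA : A.PosSemidef)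
    {N : ℕ} (hN : A.rank ≤ N) :
    ∃ v : Fin N → n → 𝕜, A = ∑ i, vecMulVec (v i) (star (v i)) := by
  classical
  set v : n → n → 𝕜 := fun j ↦ (√(hA.1.eigenvalues j) : 𝕜) • ⇑(hA.1.eigenvectorBasis j)
  have hAv : A = ∑ j, vecMulVec (v j) (star (v j)) := by
    conv_lhs => rw [hA.1.eq_sum_eigenvalues_smul_vecMulVec]
    refine Finset.sum_congr rfl fun j _ ↦ ?_
    rw [star_smul, smul_vecMulVec, vecMulVec_smul]
    simp only [smul_smul, RCLike.star_def, RCLike.conj_ofReal]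
    rw [← RCLike.ofReal_mul, Real.mul_self_sqrt (hA.eigenvalues_nonneg j),
      RCLike.real_smul_eq_coe_smul (K := 𝕜)]
  obtain ⟨w, hw⟩ := Fintype.exists_sum_fin_eq_sum_of_card_le (N := N)
    (fun x ↦ vecMulVec x (star x)) (by simp) v {j | hA.1.eigenvalues j ≠ 0}
    (fun j hj ↦ by rw [Finset.mem_filter_univ, not_not] at hj; simp [v, hj])
    (by rwa [← Fintype.card_subtype, ← hA.1.rank_eq_card_non_zero_eigs])
  exact ⟨w, hAv.trans hw⟩

end Matrix

/-- Higher-rank extension of Proposition 3: if the value Hessian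
`V = Σᵢ rⁱ (rⁱ)ᵀ` is a sum of `N` rank-one terms, `M` is symmetric positive
definite, `Qxx = Fxᵀ V Fx`, `Qxu = Fxᵀ V Fu`, then `W = Qxx - Qxu M⁻¹ Qxuᵀ` is
symmetric of rank at most `N`, and when `W` is positive semidefinite it again
factors as a sum of `N` outer products. -/
theorem stmt5 (n m N : ℕ) (r : Fin N → Fin n → ℝ)
    (Fx : Matrix (Fin n) (Fin n) ℝ) (Fu : Matrix (Fin n) (Fin m) ℝ)
    (M : Matrix (Fin m) (Fin m) ℝ) (hM : M.PosDef)
    (V : Matrix (Fin n) (Fin n) ℝ) (hV : V = ∑ i, vecMulVec (r i) (r i))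
    (Qxx : Matrix (Fin n) (Fin n) ℝ) (hQxx : Qxx = Fxᵀ * V * Fx)
    (Qxu : Matrix (Fin n) (Fin m) ℝ) (hQxu : Qxu = Fxᵀ * V * Fu)
    (W : Matrix (Fin n) (Fin n) ℝ) (hW : W = Qxx - Qxu * M⁻¹ * Qxuᵀ) :
    W.IsSymm ∧ W.rank ≤ N ∧
    (W.PosSemidef → ∃ rt : Fin N → Fin n → ℝ, W = ∑ i, vecMulVec (rt i) (rt i)) := by
  set A := of r
  have hVA : V = Aᵀ * A := hV.trans (sum_vecMulVec_self_eq_transpose_mul r)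
  have hherm : W.IsHermitian := by
    rw [hW, hQxx, hQxu]
    refine (isHermitian_conjTranspose_mul_mul Fx ?_).sub
      (isHermitian_mul_mul_conjTranspose _ hM.isHermitian.inv)
    simpa [hVA] using isHermitian_conjTranspose_mul_self A
  have hrank : W.rank ≤ N := by
    have hWX : W = (A * Fx)ᵀ * (A * Fx) -
        (A * Fx)ᵀ * (A * Fu) * M⁻¹ * ((A * Fx)ᵀ * (A * Fu))ᵀ := by
      simp only [hW, hQxx, hQxu, hVA, transpose_mul, Matrix.mul_assoc]
    simpa [hWX] using rank_transpose_mul_self_sub_le (A * Fx) (A * Fu) M⁻¹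
  refine ⟨isHermitian_iff_isSymm.mp hherm, hrank, fun hPSD ↦ ?_⟩
  simpa using hPSD.exists_eq_sum_vecMulVec_of_rank_le hrank
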